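/- arXiv:2602.02764 — 5 statements merged into one kernel-verified Lean document; each statement's English description precedes it below -/
import Mathlib

section
/- Let k be a natural number. Then the X-word length of c^k in the free group F₃ equals k, i.e. |c^k|_X = k. -/
/-- `F₃`, the free group on three generators `a, b, c`. -/
abbrev F3 : Type := FreeGroup (Fin 3)

/-- The generator `a`. -/
def ga : F3 := FreeGroup.of 0
/-- The generator `b`. -/
def gb : F3 := FreeGroup.of 1
/-- The generator `c`. -/
def gc : F3 := FreeGroup.of 2

/-- The standard generating set `S = {a, b, c, a⁻¹, b⁻¹, c⁻¹}`.
The word length `|u|` with respect to `S` is `FreeGroup.norm u`. -/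
def Sgen : Set F3 := {ga, gb, gc, ga⁻¹, gb⁻¹, gc⁻¹}

/-- The `T`-word length of `g`: the least `n ≥ 0` such that `g` is a product of
`n` elements of `T` (the identity has length `0`). -/
noncomputable def wordLen (T : Set F3) (g : F3) : ℕ :=
  sInf {n : ℕ | ∃ l : List F3, (∀ x ∈ l, x ∈ T) ∧ l.prod = g ∧ l.length = n}

/-- `x(v,j) = v b^(5^(2j-1)) v⁻¹ a^(5^(2j)) b^(5^(2j))`. -/
def xgen (v : F3) (j : ℕ) : F3 :=
  v * gb ^ (5 ^ (2 * j - 1)) * v⁻¹ * ga ^ (5 ^ (2 * j)) * gb ^ (5 ^ (2 * j))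

/-- `X_∞ = ⋃_{j ≥ 2} X_j` where `X_j = {x(v,j) : |v| ≤ 5^j}`. -/
def Xinf : Set F3 :=
  ⋃ j ∈ {j : ℕ | 2 ≤ j}, {w : F3 | ∃ v : F3, v.norm ≤ 5 ^ j ∧ w = xgen v j}

/-- The generating set `X = X_∞ ∪ S`. -/
def Xgen : Set F3 := Xinf ∪ Sgen

/-- The `c`-exponent homomorphism. -/
noncomputable def phi : F3 →* Multiplicative ℤ :=
  FreeGroup.lift (fun i => Multiplicative.ofAdd (if i = 2 then 1 else 0))

lemma phi_ga : phi ga = 1 := by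
  simp [phi, ga, FreeGroup.lift_apply_of]

lemma phi_gb : phi gb = 1 := by
  simp [phi, gb, FreeGroup.lift_apply_of]

lemma phi_gc : phi gc = Multiplicative.ofAdd 1 := by
  simp [phi, gc, FreeGroup.lift_apply_of]

lemma phi_le (x : F3) (hx : x ∈ Xgen) : Multiplicative.toAdd (phi x) ≤ 1 := by
  rcases hx with hx | hx
  · simp only [Xinf, Set.mem_iUnion, Set.mem_setOf_eq] at hx
    obtain ⟨j, hj, v, hv, rfl⟩ := hx
    simp [xgen, map_mul, map_pow, phi_ga, phi_gb]
  · rcases hx with rfl | rfl | rfl | rfl | rfl | rfl <;>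
      simp [map_inv, phi_ga, phi_gb, phi_gc]

/-- Lemma 3.1c: `|c^k|_X = k`. -/
theorem cPow_wordLen (k : ℕ) : wordLen Xgen (gc ^ k) = k := by
  have hmem : k ∈ {n : ℕ | ∃ l : List F3, (∀ x ∈ l, x ∈ Xgen) ∧ l.prod = gc ^ k ∧ l.length = n} := by
    refine ⟨List.replicate k gc, ?_, by simp, by simp⟩
    intro x hx
    rw [List.mem_replicate] at hx
    rw [hx.2]
    right
    simp [Sgen]
  apply le_antisymm
  · exact Nat.sInf_le hmem
  · apply le_csInf ⟨k, hmem⟩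
    rintro n ⟨l, hl, hprod, rfl⟩
    have key : ∀ m : List F3, (∀ x ∈ m, x ∈ Xgen) →
        Multiplicative.toAdd (phi m.prod) ≤ (m.length : ℤ) := by
      intro m
      induction m with
      | nil => simp
      | cons a t ih =>
        intro h
        have h1 := phi_le a (h a (by simp))
        have h2 := ih (fun x hx => h x (by simp [hx]))
        simp only [List.prod_cons, map_mul, toAdd_mul, List.length_cons]
        push_cast
        omega
    have h1 := key l hl
    rw [hprod] at h1
    have h2 : Multiplicative.toAdd (phi (gc ^ k)) = (k : ℤ) := by
      simp [map_pow, phi_gc]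
    rw [h2] at h1
    exact_mod_cast h1
end

section
/- Let n ≥ 1 be a natural number and let v ∈ F₃ satisfy |v| ≤ 5^n. Then there exist a natural number k and w ∈ F₃ with |w| + k ≤ 5^n and k ≤ 5^{2n} such that x(v,n) = a^k w b^{5^{2n−1}} w⁻¹ a^{5^{2n}−k} b^{5^{2n}} and this expression is reduced, i.e. |x(v,n)| = 2|w| + 5^{2n−1} + 2·5^{2n}. -/
open List FreeGroup

abbrev Ltr := Fin 3 × Bool

/-- The no-cancellation relation between adjacent letters. -/
def Rr (p q : Ltr) : Prop := ¬(p.1 = q.1 ∧ p.2 = !q.2)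

instance : DecidablePred fun pq : Ltr × Ltr => Rr pq.1 pq.2 := fun _ => by unfold Rr; infer_instance

lemma reduce_eq_self_of_chain' : ∀ {L : List Ltr}, List.Chain' Rr L → FreeGroup.reduce L = L := by
  intro L h
  induction L with
  | nil => rfl
  | cons x L ih =>
    rw [FreeGroup.reduce.cons, ih h.tail]
    cases L with
    | nil => rfl
    | cons y t =>
      have hxy : Rr x y := (List.isChain_cons_cons.mp h).1
      exact if_neg hxy

lemma exists_cancel_of_not_chain' : ∀ {L : List Ltr}, ¬ List.Chain' Rr L →
    ∃ (L₂ : List Ltr) (x : Fin 3) (b : Bool) (L₃ : List Ltr),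
      L = L₂ ++ (x, b) :: (x, !b) :: L₃ := by
  intro L
  induction L with
  | nil => intro h; exact absurd List.isChain_nil h
  | cons p L ih =>
    intro h
    cases L with
    | nil => exact absurd (List.isChain_singleton p) h
    | cons q t =>
      simp only [List.Chain', List.isChain_cons_cons] at h
      by_cases hpq : Rr p q
      · obtain ⟨L₂, x, b, L₃, hL⟩ := ih (fun hc => h ⟨hpq, hc⟩)
        exact ⟨p :: L₂, x, b, L₃, by rw [hL]; rfl⟩
      · rw [Rr, not_not] at hpq
        refine ⟨[], p.1, p.2, t, ?_⟩
        have hq : q = (p.1, !p.2) := by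
          obtain ⟨h1, h2⟩ := hpq
          have : q = (q.1, q.2) := rfl
          rw [this, ← h1, h2, Bool.not_not]
        simp [hq]

lemma chain'_of_reduce {L : List Ltr} (h : FreeGroup.reduce L = L) : List.Chain' Rr L := by
  by_contra hc
  obtain ⟨L₂, x, b, L₃, hL⟩ := exists_cancel_of_not_chain' hc
  exact FreeGroup.reduce.not (h.trans hL)

lemma chain'_toWord (x : FreeGroup (Fin 3)) : List.Chain' Rr x.toWord := chain'_of_reduce (FreeGroup.reduce_toWord x)

lemma toWord_mk_of_chain' {L : List Ltr} (h : List.Chain' Rr L) :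
    (FreeGroup.mk L).toWord = L := (FreeGroup.toWord_mk).trans (reduce_eq_self_of_chain' h)

lemma chain'_invRev {L : List Ltr} (h : List.Chain' Rr L) :
    List.Chain' Rr (FreeGroup.invRev L) := by
  apply chain'_of_reduce
  rw [FreeGroup.reduce_invRev, reduce_eq_self_of_chain' h]

lemma chain'_replicate (n : ℕ) (x : Ltr) : List.Chain' Rr (List.replicate n x) :=
  chain'_of_reduce (FreeGroup.reduce_replicate n x)

lemma mk_replicate_pow (a : Fin 3) (n : ℕ) :
    FreeGroup.mk (List.replicate n (a, true)) = FreeGroup.of a ^ n := by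
  conv_rhs => rw [← FreeGroup.mk_toWord (x := FreeGroup.of a ^ n)]
  rw [FreeGroup.toWord_of_pow]

lemma mk_b_letters {t : List Ltr} (ht : ∀ x ∈ t, x.1 = 1) :
    ∃ z : ℤ, FreeGroup.mk t = FreeGroup.of (1 : Fin 3) ^ z := by
  induction t with
  | nil => exact ⟨0, rfl⟩
  | cons p t ih =>
    obtain ⟨z, hz⟩ := ih (fun x hx => ht x (List.mem_cons_of_mem _ hx))
    have hp1 : p.1 = 1 := ht p (List.mem_cons_self)
    have hsplit : FreeGroup.mk (p :: t) = FreeGroup.mk [p] * FreeGroup.mk t := by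
      rw [FreeGroup.mul_mk]; rfl
    cases hb : p.2 with
    | true =>
      refine ⟨1 + z, ?_⟩
      have hp : p = ((1 : Fin 3), true) := by
        have : p = (p.1, p.2) := rfl
        rw [this, hp1, hb]
      rw [hsplit, hz, hp]
      rw [zpow_add, zpow_one]
      rfl
    | false =>
      refine ⟨-1 + z, ?_⟩
      have hp : p = ((1 : Fin 3), false) := by
        have : p = (p.1, p.2) := rfl
        rw [this, hp1, hb]
      rw [hsplit, hz, hp]
      rw [zpow_add, zpow_neg_one]
      have : FreeGroup.mk [((1 : Fin 3), false)] = (FreeGroup.of (1 : Fin 3))⁻¹ := by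
        have h1 : FreeGroup.of (1 : Fin 3) = FreeGroup.mk [((1:Fin 3), true)] := rfl
        rw [h1, FreeGroup.inv_mk]
        rfl
      rw [this]

lemma head?_dropWhile_not' {α : Type*} (p : α → Bool) :
    ∀ l : List α, ∀ x ∈ (l.dropWhile p).head?, ¬ p x := by
  intro l
  induction l with
  | nil => simp
  | cons a l ih =>
    by_cases hp : p a
    · rw [List.dropWhile_cons_of_pos hp]; exact ih
    · rw [List.dropWhile_cons_of_neg hp]
      intro x hx
      simp only [List.head?_cons, Option.mem_def, Option.some.injEq] at hx
      exact hx ▸ hp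

lemma mem_head?_append_left {α : Type*} {l l' : List α} {y : α} (h : y ∈ l.head?) :
    y ∈ (l ++ l').head? := by
  cases l with
  | nil => simp at h
  | cons a s => simpa using h

lemma mem_head?_append {α : Type*} {l l' : List α} {y : α} (h : y ∈ (l ++ l').head?) :
    y ∈ l.head? ∨ y ∈ l'.head? := by
  cases l with
  | nil => right; simpa using h
  | cons a t => left; simpa using h

lemma head?_invRev (L : List Ltr) :
    (FreeGroup.invRev L).head? = L.getLast?.map (fun g => (g.1, !g.2)) := by
  rw [FreeGroup.invRev, List.head?_reverse, List.getLast?_map]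

lemma getLast?_invRev (L : List Ltr) :
    (FreeGroup.invRev L).getLast? = L.head?.map (fun g => (g.1, !g.2)) := by
  rw [FreeGroup.invRev, List.getLast?_reverse, List.head?_map]

lemma head?_replicate_append {α : Type*} {n : ℕ} {a y : α} {Z : List α} (hn : n ≠ 0)
    (h : y ∈ (List.replicate n a ++ Z).head?) : y = a := by
  obtain ⟨m, rfl⟩ : ∃ m, n = m + 1 := ⟨n - 1, by omega⟩
  rw [List.replicate_succ] at h
  simpa [eq_comm] using h

lemma getLast?_replicate_mem {α : Type*} {n : ℕ} {a x : α}
    (h : x ∈ (List.replicate n a).getLast?) : x = a ∧ n ≠ 0 := by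
  cases n with
  | zero => simp at h
  | succ m =>
    constructor
    · exact List.eq_of_mem_replicate (List.mem_of_mem_getLast? h)
    · exact Nat.succ_ne_zero m

theorem main_aux (v : FreeGroup (Fin 3)) (B A : ℕ) (hB : 0 < B) (hkA : v.norm < A) :
    ∃ (k : ℕ) (w : FreeGroup (Fin 3)), w.norm + k ≤ v.norm ∧ k ≤ A ∧
      v * FreeGroup.of 1 ^ B * v⁻¹ * FreeGroup.of 0 ^ A * FreeGroup.of 1 ^ A =
        FreeGroup.of (0 : Fin 3) ^ k * w * FreeGroup.of 1 ^ B * w⁻¹ *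
          FreeGroup.of 0 ^ (A - k) * FreeGroup.of 1 ^ A ∧
      (v * FreeGroup.of 1 ^ B * v⁻¹ * FreeGroup.of 0 ^ A * FreeGroup.of 1 ^ A).norm =
        2 * w.norm + B + 2 * A := by
  classical
  set f : Ltr → Ltr := fun g => (g.1, !g.2) with hf
  set pA : Ltr → Bool := fun q => decide (q = ((0 : Fin 3), true)) with hpA
  set pB : Ltr → Bool := fun q => decide (q.1 = (1 : Fin 3)) with hpB
  set lv : List Ltr := v.toWord with hlvdef
  set k : ℕ := (lv.takeWhile pA).length with hk
  set rest : List Ltr := lv.dropWhile pA with hrest0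
  have htake : lv.takeWhile pA = List.replicate k ((0 : Fin 3), true) := by
    apply List.eq_replicate_iff.mpr
    refine ⟨rfl, fun b hb => ?_⟩
    have := List.mem_takeWhile_imp hb
    rwa [hpA, decide_eq_true_eq] at this
  have hlv : lv = List.replicate k ((0 : Fin 3), true) ++ rest := by
    rw [← htake, hrest0, List.takeWhile_append_dropWhile]
  set wl : List Ltr := (rest.reverse.dropWhile pB).reverse with hwl
  set t : List Ltr := (rest.reverse.takeWhile pB).reverse with htdef
  have hrest : rest = wl ++ t := by
    conv_lhs => rw [← List.reverse_reverse rest,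
      ← List.takeWhile_append_dropWhile (p := pB) (l := rest.reverse)]
    rw [List.reverse_append]
  have ht : ∀ x ∈ t, x.1 = 1 := by
    intro x hx
    rw [htdef, List.mem_reverse] at hx
    have := List.mem_takeWhile_imp hx
    rwa [hpB, decide_eq_true_eq] at this
  -- chain facts
  have hchain_lv : List.Chain' Rr lv := chain'_toWord v
  have hchain_wl : List.Chain' Rr wl :=
    hchain_lv.infix ⟨List.replicate k ((0 : Fin 3), true), t, by
      rw [hlv, hrest, List.append_assoc]⟩
  have hlast_wl : ∀ x ∈ wl.getLast?, ¬ x.1 = 1 := by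
    intro x hx
    rw [hwl, List.getLast?_reverse] at hx
    have := head?_dropWhile_not' pB _ x hx
    rwa [hpB, decide_eq_true_eq] at this
  have hhead_rest : ∀ y ∈ rest.head?, ¬ y = ((0 : Fin 3), true) := by
    intro y hy
    have := head?_dropWhile_not' pA _ y (hrest0 ▸ hy)
    rwa [hpA, decide_eq_true_eq] at this
  have hhead_wl_rest : ∀ y ∈ wl.head?, y ∈ rest.head? := by
    intro y hy
    rw [hrest]
    exact mem_head?_append_left hy
  have hjun : ∀ x ∈ (List.replicate k ((0 : Fin 3), true)).getLast?, ∀ y ∈ rest.head?, Rr x y :=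
    (List.isChain_append.mp (by rw [← hlv]; exact hchain_lv)).2.2
  -- the element w
  set w : FreeGroup (Fin 3) := FreeGroup.mk wl with hwdef
  have hw_toWord : w.toWord = wl := toWord_mk_of_chain' hchain_wl
  have hw_norm : w.norm = wl.length := by rw [FreeGroup.norm, hw_toWord]
  obtain ⟨z, hz⟩ := mk_b_letters ht
  have hv_decomp : v = FreeGroup.of 0 ^ k * w * FreeGroup.of (1 : Fin 3) ^ z := by
    conv_lhs => rw [← FreeGroup.mk_toWord (x := v), ← hlvdef, hlv, hrest]
    rw [← FreeGroup.mul_mk, ← FreeGroup.mul_mk, mk_replicate_pow, hz, hwdef, mul_assoc]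
  have hnormv : v.norm = lv.length := rfl
  have hk_le : k ≤ v.norm := by
    rw [hnormv, hlv]
    simp
  have hkA' : k ≤ A := le_of_lt (lt_of_le_of_lt hk_le hkA)
  -- group identity
  have hgrp : v * FreeGroup.of 1 ^ B * v⁻¹ * FreeGroup.of 0 ^ A * FreeGroup.of 1 ^ A =
      FreeGroup.of (0 : Fin 3) ^ k * w * FreeGroup.of 1 ^ B * w⁻¹ *
        FreeGroup.of 0 ^ (A - k) * FreeGroup.of 1 ^ A := by
    have hsum : A - k + k = A := Nat.sub_add_cancel hkA'
    rw [hv_decomp, ← hsum, pow_add]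
    group
    rw [Nat.add_sub_cancel]
  -- reducedness
  have hchain_inv : List.Chain' Rr (FreeGroup.invRev wl) := chain'_invRev hchain_wl
  have hAk : A - k ≠ 0 := by
    have : k < A := lt_of_le_of_lt hk_le hkA
    omega
  have hB0 : B ≠ 0 := by omega
  have hFULL : List.Chain' Rr (List.replicate k ((0 : Fin 3), true) ++ (wl ++
      (List.replicate B ((1 : Fin 3), true) ++ (FreeGroup.invRev wl ++
        (List.replicate (A - k) ((0 : Fin 3), true) ++
          List.replicate A ((1 : Fin 3), true)))))) := by
    have RrA : Rr ((0 : Fin 3), true) ((1 : Fin 3), true) := by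
      rintro ⟨h1, -⟩; exact absurd h1 (by decide)
    have RrB : Rr ((1 : Fin 3), true) ((0 : Fin 3), true) := by
      rintro ⟨h1, -⟩; exact absurd h1 (by decide)
    have RrC : Rr ((0 : Fin 3), true) ((0 : Fin 3), true) := by
      rintro ⟨-, h2⟩; exact absurd h2 (by decide)
    refine List.isChain_append.mpr ⟨chain'_replicate _ _, ?_, ?_⟩
    · -- Chain' (wl ++ ...)
      refine List.isChain_append.mpr ⟨hchain_wl, ?_, ?_⟩
      · -- Chain' (P3 ++ ...)
        refine List.isChain_append.mpr ⟨chain'_replicate _ _, ?_, ?_⟩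
        · -- Chain' (invRev wl ++ ...)
          refine List.isChain_append.mpr ⟨hchain_inv, ?_, ?_⟩
          · -- Chain' (P5 ++ P6)
            refine List.isChain_append.mpr ⟨chain'_replicate _ _, chain'_replicate _ _, ?_⟩
            -- J5
            intro x hx y hy
            obtain ⟨rfl, -⟩ := getLast?_replicate_mem hx
            have hy' : y = ((1 : Fin 3), true) :=
              List.eq_of_mem_replicate (List.mem_of_mem_head? hy)
            subst hy'
            exact RrA
          · -- J4
            intro x hx y hy
            have hy' : y = ((0 : Fin 3), true) := head?_replicate_append hAk hy
            rw [getLast?_invRev] at hx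
            obtain ⟨u, hu, rfl⟩ := Option.mem_map.mp hx
            have hu0 : ¬ u = ((0 : Fin 3), true) := hhead_rest u (hhead_wl_rest u hu)
            subst hy'
            rintro ⟨h1, h2⟩
            apply hu0
            have h1' : u.1 = 0 := h1
            have h2' : (!u.2) = false := h2
            have hu2 : u.2 = true := by simpa using h2'
            have hh : u = (u.1, u.2) := rfl
            rw [hh, h1', hu2]
        · -- J3
          intro x hx y hy
          obtain ⟨rfl, -⟩ := getLast?_replicate_mem hx
          rcases mem_head?_append hy with h | h
          · rw [head?_invRev] at h
            obtain ⟨u, hu, rfl⟩ := Option.mem_map.mp h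
            have hu1 := hlast_wl u hu
            rintro ⟨h1, -⟩
            exact hu1 h1.symm
          · have hy' : y = ((0 : Fin 3), true) := head?_replicate_append hAk h
            subst hy'
            exact RrB
      · -- J2
        intro x hx y hy
        have hy' : y = ((1 : Fin 3), true) := head?_replicate_append hB0 hy
        have hx1 := hlast_wl x hx
        subst hy'
        rintro ⟨h1, -⟩
        exact hx1 h1
    · -- J1
      intro x hx y hy
      obtain ⟨rfl, hk0⟩ := getLast?_replicate_mem hx
      rcases mem_head?_append hy with h | h
      · exact hjun _ hx y (hhead_wl_rest y h)
      · have hy' : y = ((1 : Fin 3), true) := head?_replicate_append hB0 h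
        subst hy'
        exact RrA
  have hX : v * FreeGroup.of 1 ^ B * v⁻¹ * FreeGroup.of 0 ^ A * FreeGroup.of 1 ^ A =
      FreeGroup.mk (List.replicate k ((0 : Fin 3), true) ++ (wl ++
      (List.replicate B ((1 : Fin 3), true) ++ (FreeGroup.invRev wl ++
        (List.replicate (A - k) ((0 : Fin 3), true) ++
          List.replicate A ((1 : Fin 3), true)))))) := by
    rw [hgrp, hwdef, ← mk_replicate_pow 0 k, ← mk_replicate_pow 1 B,
      ← mk_replicate_pow 0 (A - k), ← mk_replicate_pow 1 A, FreeGroup.inv_mk]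
    simp only [FreeGroup.mul_mk, List.append_assoc]
  have hnormX : (v * FreeGroup.of 1 ^ B * v⁻¹ * FreeGroup.of 0 ^ A *
      FreeGroup.of 1 ^ A).norm = 2 * w.norm + B + 2 * A := by
    rw [hX, FreeGroup.norm, toWord_mk_of_chain' hFULL]
    simp only [List.length_append, List.length_replicate, FreeGroup.invRev_length, hw_norm]
    have : k < A := lt_of_le_of_lt hk_le hkA
    omega
  refine ⟨k, w, ?_, hkA', hgrp, hnormX⟩
  rw [hnormv, hlv, hrest, hw_norm]
  simp only [List.length_append, List.length_replicate]
  omega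

/-- Corollary 3.1a: as a reduced word, `x(v,n)` has the form
`a^k w b^(5^(2n-1)) w⁻¹ a^(5^(2n)-k) b^(5^(2n))` with `|w| + k ≤ 5^n`. -/
theorem xgen_reduced_form (n : ℕ) (hn : 1 ≤ n) (v : F3) (hv : v.norm ≤ 5 ^ n) :
    ∃ (k : ℕ) (w : F3), w.norm + k ≤ 5 ^ n ∧ k ≤ 5 ^ (2 * n) ∧
      xgen v n =
        ga ^ k * w * gb ^ (5 ^ (2 * n - 1)) * w⁻¹ * ga ^ (5 ^ (2 * n) - k) *
          gb ^ (5 ^ (2 * n)) ∧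
      (xgen v n).norm = 2 * w.norm + 5 ^ (2 * n - 1) + 2 * 5 ^ (2 * n) := by
  have hB : 0 < 5 ^ (2 * n - 1) := Nat.pow_pos (by norm_num)
  have hlt : v.norm < 5 ^ (2 * n) :=
    lt_of_le_of_lt hv (Nat.pow_lt_pow_right (by norm_num) (by omega))
  obtain ⟨k, w, h1, h2, h3, h4⟩ := main_aux v (5 ^ (2 * n - 1)) (5 ^ (2 * n)) hB hlt
  exact ⟨k, w, le_trans h1 hv, h2, h3, h4⟩
end

section
/- Let k ≥ 0 and n ≥ 2 be natural numbers. Then the X-word length of c^k a^{5^{2n}} b^{5^{2n}} in F₃ equals k + 5^{2n−1} + 1, i.e. |c^k a^{5^{2n}} b^{5^{2n}}|_X = k + 5^{2n−1} + 1. In particular (taking k = 0), |a^{5^{2n}} b^{5^{2n}}|_X = 5^{2n−1} + 1. -/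
noncomputable section

def shiftF (s : ℤ) (f : ℤ →₀ ℤ) : ℤ →₀ ℤ := Finsupp.equivMapDomain (Equiv.addRight s) f

lemma shiftF_apply (s : ℤ) (f : ℤ →₀ ℤ) (x : ℤ) : shiftF s f x = f (x - s) := by
  rw [shiftF, Finsupp.equivMapDomain_apply]; rfl

lemma shiftF_add (s : ℤ) (f g : ℤ →₀ ℤ) :
    shiftF s (f + g) = shiftF s f + shiftF s g := by
  ext x; rw [Finsupp.add_apply, shiftF_apply, shiftF_apply, shiftF_apply, Finsupp.add_apply]

lemma shiftF_zero (s : ℤ) : shiftF s (0 : ℤ →₀ ℤ) = 0 := by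
  ext x; rw [shiftF_apply]; rfl

lemma shiftF_zero_shift (f : ℤ →₀ ℤ) : shiftF 0 f = f := by
  ext x; rw [shiftF_apply, sub_zero]

lemma shiftF_shiftF (s t : ℤ) (f : ℤ →₀ ℤ) : shiftF s (shiftF t f) = shiftF (t + s) f := by
  ext x; rw [shiftF_apply, shiftF_apply, shiftF_apply, sub_sub, add_comm s t]

lemma shiftF_single (s a z : ℤ) :
    shiftF s (Finsupp.single a z) = Finsupp.single (a + s) z := by
  ext x
  rw [shiftF_apply, Finsupp.single_apply, Finsupp.single_apply]
  by_cases h : a = x - s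
  · rw [if_pos h, if_pos (by omega)]
  · rw [if_neg h, if_neg (by omega)]

/-- the wreath product `ℤ ≀ ℤ` (carrier). -/
structure W where
  f : ℤ →₀ ℤ
  m : ℤ

lemma W.ext' {x y : W} (h1 : x.f = y.f) (h2 : x.m = y.m) : x = y := by
  cases x; cases y; cases h1; cases h2; rfl

instance : Group W where
  mul x y := ⟨x.f + shiftF x.m y.f, x.m + y.m⟩
  one := ⟨0, 0⟩
  inv x := ⟨-(shiftF (-x.m) x.f), -x.m⟩
  mul_assoc x y z := W.ext'
    (by show x.f + shiftF x.m y.f + shiftF (x.m + y.m) z.f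
          = x.f + shiftF x.m (y.f + shiftF y.m z.f)
        rw [shiftF_add, shiftF_shiftF, add_comm y.m x.m, add_assoc])
    (add_assoc _ _ _)
  one_mul x := W.ext' (by show 0 + shiftF 0 x.f = x.f; rw [shiftF_zero_shift, zero_add])
    (zero_add _)
  mul_one x := W.ext' (by show x.f + shiftF x.m 0 = x.f; rw [shiftF_zero, add_zero])
    (add_zero _)
  inv_mul_cancel x := W.ext'
    (by show -(shiftF (-x.m) x.f) + shiftF (-x.m) x.f = 0; rw [neg_add_cancel])
    (neg_add_cancel _)

@[simp] lemma W_mul_f (x y : W) : (x * y).f = x.f + shiftF x.m y.f := rfl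
@[simp] lemma W_mul_m (x y : W) : (x * y).m = x.m + y.m := rfl
@[simp] lemma W_one_f : (1 : W).f = 0 := rfl
@[simp] lemma W_one_m : (1 : W).m = 0 := rfl
@[simp] lemma W_inv_f (x : W) : (x⁻¹).f = -(shiftF (-x.m) x.f) := rfl
@[simp] lemma W_inv_m (x : W) : (x⁻¹).m = -x.m := rfl

lemma W_pow_a (p : ℕ) : (⟨0, 1⟩ : W) ^ p = ⟨0, p⟩ := by
  induction p with
  | zero => rfl
  | succ p ih =>
      rw [pow_succ, ih]
      exact W.ext' (by rw [W_mul_f]; show (0:ℤ→₀ℤ) + shiftF _ 0 = 0; rw [shiftF_zero, add_zero])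
        (by rw [W_mul_m]; push_cast; ring)

lemma W_pow_b (p : ℕ) : (⟨Finsupp.single 0 1, 0⟩ : W) ^ p = ⟨Finsupp.single 0 p, 0⟩ := by
  induction p with
  | zero =>
      refine W.ext' ?_ rfl
      show (0:ℤ→₀ℤ) = _
      rw [Nat.cast_zero, Finsupp.single_zero]
  | succ p ih =>
      rw [pow_succ, ih]
      refine W.ext' ?_ (by rw [W_mul_m, add_zero])
      rw [W_mul_f]
      show Finsupp.single 0 (p:ℤ) + shiftF 0 (Finsupp.single 0 1) = _
      rw [shiftF_zero_shift, ← Finsupp.single_add]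
      push_cast; ring_nf

lemma W_conj (x : W) (g : ℤ →₀ ℤ) : x * ⟨g, 0⟩ * x⁻¹ = ⟨shiftF x.m g, 0⟩ := by
  refine W.ext' ?_ (by rw [W_mul_m, W_mul_m, W_inv_m]; ring)
  rw [W_mul_f, W_inv_f, W_mul_f, W_mul_m]
  show x.f + shiftF x.m g + shiftF (x.m + 0) (-(shiftF (-x.m) x.f)) = _
  have : shiftF (x.m + 0) (-(shiftF (-x.m) x.f)) = -x.f := by
    rw [add_zero]
    have : shiftF x.m (-(shiftF (-x.m) x.f)) = -(shiftF x.m (shiftF (-x.m) x.f)) := by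
      ext y
      simp only [shiftF_apply, Finsupp.neg_apply]
    rw [this, shiftF_shiftF, neg_add_cancel, shiftF_zero_shift]
  rw [this]; abel

/-- The key homomorphism to the wreath product: `a` acts by shift, `b` is the lamp,
`c` dies. -/
def psi : F3 →* W := FreeGroup.lift ![⟨0, 1⟩, ⟨Finsupp.single 0 1, 0⟩, 1]

@[simp] lemma psi_a : psi ga = ⟨0, 1⟩ := FreeGroup.lift_apply_of
@[simp] lemma psi_b : psi gb = ⟨Finsupp.single 0 1, 0⟩ := FreeGroup.lift_apply_of
@[simp] lemma psi_c : psi gc = 1 := FreeGroup.lift_apply_of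

/-- Homomorphism counting the `c`-exponent (in the `.m` slot). -/
def psiC : F3 →* W := FreeGroup.lift ![1, 1, ⟨0, 1⟩]

@[simp] lemma psiC_a : psiC ga = 1 := FreeGroup.lift_apply_of
@[simp] lemma psiC_b : psiC gb = 1 := FreeGroup.lift_apply_of
@[simp] lemma psiC_c : psiC gc = ⟨0, 1⟩ := FreeGroup.lift_apply_of

/-- sum of the coefficients -/
def sumCoef (f : ℤ →₀ ℤ) : ℤ := f.sum fun _ v => v

lemma sumCoef_add (f g : ℤ →₀ ℤ) : sumCoef (f + g) = sumCoef f + sumCoef g :=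
  Finsupp.sum_add_index' (fun _ => rfl) (fun _ _ _ => rfl)

lemma sumCoef_single (a z : ℤ) : sumCoef (Finsupp.single a z) = z :=
  Finsupp.sum_single_index rfl

lemma sumCoef_zero : sumCoef 0 = 0 := Finsupp.sum_zero_index

/-- sum of the coefficients away from position `N` -/
def offSum (N : ℤ) (f : ℤ →₀ ℤ) : ℤ := sumCoef f - f N

lemma offSum_add (N : ℤ) (f g : ℤ →₀ ℤ) :
    offSum N (f + g) = offSum N f + offSum N g := by
  rw [offSum, offSum, offSum, sumCoef_add, Finsupp.add_apply]; ring

lemma offSum_zero (N : ℤ) : offSum N 0 = 0 := by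
  rw [offSum, sumCoef_zero]; simp

lemma offSum_single (N a z : ℤ) :
    offSum N (Finsupp.single a z) = if a = N then 0 else z := by
  rw [offSum, sumCoef_single, Finsupp.single_apply]
  split <;> ring

lemma psi_gb_pow (p : ℕ) : psi (gb ^ p) = ⟨Finsupp.single 0 p, 0⟩ := by
  rw [map_pow, psi_b, W_pow_b]

lemma psi_ga_pow (p : ℕ) : psi (ga ^ p) = ⟨0, p⟩ := by
  rw [map_pow, psi_a, W_pow_a]

lemma psi_xgen (v : F3) (j : ℕ) :
    psi (xgen v j) =
      ⟨Finsupp.single (psi v).m ((5 ^ (2 * j - 1) : ℕ) : ℤ) +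
        Finsupp.single ((5 ^ (2 * j) : ℕ) : ℤ) ((5 ^ (2 * j) : ℕ) : ℤ),
        ((5 ^ (2 * j) : ℕ) : ℤ)⟩ := by
  have h1 : psi (v * gb ^ (5 ^ (2 * j - 1)) * v⁻¹)
      = ⟨Finsupp.single ((psi v).m) ((5 ^ (2 * j - 1) : ℕ) : ℤ), 0⟩ := by
    rw [map_mul, map_mul, map_inv, psi_gb_pow, W_conj, shiftF_single, zero_add]
  rw [xgen, map_mul, map_mul, h1, psi_ga_pow, psi_gb_pow]
  refine W.ext' ?_ ?_
  · show Finsupp.single (psi v).m ((5 ^ (2 * j - 1) : ℕ) : ℤ) + shiftF 0 0 +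
      shiftF (0 + ((5 ^ (2*j) : ℕ) : ℤ)) (Finsupp.single 0 ((5 ^ (2*j) : ℕ) : ℤ)) = _
    rw [shiftF_zero, add_zero, zero_add, shiftF_single, zero_add]
  · show (0 : ℤ) + ((5 ^ (2*j) : ℕ) : ℤ) + 0 = _
    ring

lemma psiC_xgen (v : F3) (j : ℕ) : (psiC (xgen v j)).m = 0 := by
  rw [xgen, map_mul, map_mul, map_mul, map_mul, map_inv, map_pow, map_pow, map_pow,
    psiC_a, psiC_b]
  simp

lemma abs_m_prod_le (l : List W) (h : ∀ w ∈ l, |w.m| ≤ 1) : |l.prod.m| ≤ (l.length : ℤ) := by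
  induction l with
  | nil => simp
  | cons w l ih =>
      rw [List.prod_cons, W_mul_m, List.length_cons]
      have h1 := h w (List.mem_cons_self)
      have h2 := ih (fun x hx => h x (List.mem_cons_of_mem _ hx))
      calc |w.m + l.prod.m| ≤ |w.m| + |l.prod.m| := abs_add_le _ _
        _ ≤ 1 + l.length := by omega
        _ = ((l.length + 1 : ℕ) : ℤ) := by push_cast; ring

lemma abs_psi_m_le_norm (v : F3) : |(psi v).m| ≤ (v.norm : ℤ) := by
  conv_lhs => rw [← FreeGroup.mk_toWord (x := v)]
  have hnorm : v.norm = v.toWord.length := rfl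
  rw [hnorm, psi, FreeGroup.lift_mk]
  rw [← List.length_map (as := v.toWord) (f := fun x => cond x.2 ((![⟨0, 1⟩, ⟨Finsupp.single 0 1, 0⟩, 1] : Fin 3 → W) x.1) ((![⟨0, 1⟩, ⟨Finsupp.single 0 1, 0⟩, 1] : Fin 3 → W) x.1)⁻¹)]
  apply abs_m_prod_le
  intro w hw
  rw [List.mem_map] at hw
  obtain ⟨x, -, rfl⟩ := hw
  have : ∀ i : Fin 3, |((![⟨0, 1⟩, ⟨Finsupp.single 0 1, 0⟩, 1] : Fin 3 → W) i).m| ≤ 1 := by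
    intro i
    fin_cases i <;> simp
  cases x.2 with
  | true => simpa using this x.1
  | false =>
      simp only [cond_false, W_inv_m, abs_neg]
      exact this x.1

/-- The per-entry accounting data: `p` is the `a`-power mass, `q = p/5` the conjugate
`b`-power mass, and `a1/b1/c1/x1` records the kind of generator. -/
def Good (N : ℤ) (t : F3) : Prop :=
  ∃ p q a1 b1 c1 x1 : ℕ,
    1 = a1 + b1 + c1 + x1 ∧ p = 5 * q ∧ (x1 = 0 → p = 0) ∧
    |(psi t).m - (p : ℤ)| ≤ (a1 : ℤ) ∧ |(psiC t).m| ≤ (c1 : ℤ) ∧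
    ∀ s : ℤ, (q : ℤ) - (b1 : ℤ) ≤ offSum N (shiftF s (psi t).f)

lemma good_of_S {t : F3} (ht : t ∈ Sgen) (N : ℤ) : Good N t := by
  have hb : ∀ z : ℤ, ∀ s : ℤ, (-1 : ℤ) ≤ offSum N (shiftF s (Finsupp.single 0 z)) →
      True := fun _ _ _ => trivial
  clear hb
  rcases ht with rfl | rfl | rfl | rfl | rfl | rfl
  · -- ga
    exact ⟨0, 0, 1, 0, 0, 0, rfl, rfl, fun _ => rfl, by simp, by simp,
      fun s => by simp [shiftF_zero, offSum_zero]⟩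
  · -- gb
    refine ⟨0, 0, 0, 1, 0, 0, rfl, rfl, fun _ => rfl, by simp, by simp, fun s => ?_⟩
    rw [psi_b]
    show (0 : ℤ) - 1 ≤ offSum N (shiftF s (Finsupp.single 0 1))
    rw [shiftF_single, zero_add, offSum_single]
    split <;> omega
  · -- gc
    exact ⟨0, 0, 0, 0, 1, 0, rfl, rfl, fun _ => rfl, by simp, by simp,
      fun s => by simp [shiftF_zero, offSum_zero]⟩
  · -- ga⁻¹
    exact ⟨0, 0, 1, 0, 0, 0, rfl, rfl, fun _ => rfl, by simp, by simp,
      fun s => by simp [shiftF_zero, offSum_zero]⟩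
  · -- gb⁻¹
    refine ⟨0, 0, 0, 1, 0, 0, rfl, rfl, fun _ => rfl, by simp, by simp, fun s => ?_⟩
    rw [map_inv, psi_b]
    show (0 : ℤ) - 1 ≤ offSum N (shiftF s ((⟨Finsupp.single 0 1, 0⟩ : W)⁻¹).f)
    rw [W_inv_f]
    show (0 : ℤ) - 1 ≤ offSum N (shiftF s (-(shiftF (-(0:ℤ)) (Finsupp.single 0 1))))
    rw [neg_zero, shiftF_zero_shift, ← Finsupp.single_neg, shiftF_single, zero_add,
      offSum_single]
    split <;> omega
  · -- gc⁻¹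
    exact ⟨0, 0, 0, 0, 1, 0, rfl, rfl, fun _ => rfl, by simp, by simp,
      fun s => by simp [shiftF_zero, offSum_zero]⟩

lemma good_of_X {t : F3} (ht : t ∈ Xinf) (N : ℤ) : Good N t := by
  simp only [Xinf, Set.mem_iUnion, Set.mem_setOf_eq] at ht
  obtain ⟨j, hj, v, hv, rfl⟩ := ht
  refine ⟨5 ^ (2 * j), 5 ^ (2 * j - 1), 0, 0, 0, 1, rfl, ?_, by omega, ?_, ?_, ?_⟩
  · have h : 2 * j - 1 + 1 = 2 * j := by omega
    rw [← h, pow_succ]; exact mul_comm _ _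
  · rw [psi_xgen]; simp
  · rw [abs_le]
    constructor <;> rw [psiC_xgen] <;> norm_num
  · intro s
    rw [psi_xgen]
    show (_ : ℤ) - 0 ≤ offSum N (shiftF s (_ + _))
    rw [shiftF_add, shiftF_single, shiftF_single, offSum_add, offSum_single, offSum_single]
    have hep : (psi v).m ≠ ((5 ^ (2 * j) : ℕ) : ℤ) := by
      have h1 : |(psi v).m| ≤ ((5:ℤ) ^ j) := by
        calc |(psi v).m| ≤ (v.norm : ℤ) := abs_psi_m_le_norm v
          _ ≤ ((5 ^ j : ℕ) : ℤ) := by exact_mod_cast hv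
          _ = (5:ℤ) ^ j := by push_cast; ring
      have h2 : ((5:ℤ)) ^ j < 5 ^ (2 * j) := by
        apply pow_lt_pow_right₀ (by norm_num)
        omega
      intro h
      rw [h] at h1
      have : ((5 ^ (2*j) : ℕ) : ℤ) = (5:ℤ) ^ (2*j) := by push_cast; ring
      rw [this] at h1
      rw [abs_of_nonneg (by positivity)] at h1
      omega
    have hq5 : ((5 ^ (2*j-1) : ℕ) : ℤ) ≤ ((5 ^ (2*j) : ℕ) : ℤ) := by
      have : (5:ℕ) ^ (2*j-1) ≤ 5 ^ (2*j) := Nat.pow_le_pow_right (by norm_num) (by omega)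
      exact_mod_cast this
    have he : (0:ℤ) ≤ ((5 ^ (2*j-1) : ℕ) : ℤ) := by positivity
    have hp : (0:ℤ) ≤ ((5 ^ (2*j) : ℕ) : ℤ) := by positivity
    by_cases h1 : (psi v).m + s = N
    · have h2 : ((5 ^ (2*j) : ℕ) : ℤ) + s ≠ N := by
        intro h2; apply hep; omega
      rw [if_pos h1, if_neg h2]
      omega
    · rw [if_neg h1]
      split <;> omega

lemma good_of_Xgen {t : F3} (ht : t ∈ Xgen) (N : ℤ) : Good N t := by
  rcases ht with h | h
  · exact good_of_X h N
  · exact good_of_S h N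

/-- Aggregated accounting over a word in the generators. -/
def GoodL (N : ℤ) (len : ℕ) (w : F3) : Prop :=
  ∃ p q a1 b1 c1 x1 : ℕ,
    len = a1 + b1 + c1 + x1 ∧ p = 5 * q ∧ (x1 = 0 → p = 0) ∧
    |(psi w).m - (p : ℤ)| ≤ (a1 : ℤ) ∧ |(psiC w).m| ≤ (c1 : ℤ) ∧
    ∀ s : ℤ, (q : ℤ) - (b1 : ℤ) ≤ offSum N (shiftF s (psi w).f)

lemma goodL_list (N : ℤ) (l : List F3) (h : ∀ t ∈ l, t ∈ Xgen) :
    GoodL N l.length l.prod := by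
  induction l with
  | nil =>
      refine ⟨0, 0, 0, 0, 0, 0, rfl, rfl, fun _ => rfl, by simp, by simp, fun s => ?_⟩
      rw [List.prod_nil, map_one, W_one_f, shiftF_zero, offSum_zero]
      simp
  | cons t l ih =>
      obtain ⟨p₁, q₁, a₁, b₁, c₁, x₁, e₁, hq₁, hx₁, hm₁, hc₁, ho₁⟩ :=
        good_of_Xgen (h t (List.mem_cons_self)) N
      obtain ⟨p₂, q₂, a₂, b₂, c₂, x₂, e₂, hq₂, hx₂, hm₂, hc₂, ho₂⟩ :=
        ih (fun x hx => h x (List.mem_cons_of_mem _ hx))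
      refine ⟨p₁ + p₂, q₁ + q₂, a₁ + a₂, b₁ + b₂, c₁ + c₂, x₁ + x₂, ?_, by omega,
        by omega, ?_, ?_, ?_⟩
      · rw [List.length_cons, e₂]; omega
      · rw [List.prod_cons, map_mul, W_mul_m]
        have := abs_add_le ((psi t).m - (p₁ : ℤ)) ((psi l.prod).m - (p₂ : ℤ))
        push_cast
        calc |(psi t).m + (psi l.prod).m - ((p₁:ℤ) + p₂)|
            = |((psi t).m - (p₁ : ℤ)) + ((psi l.prod).m - (p₂ : ℤ))| := by ring_nf
          _ ≤ |(psi t).m - (p₁ : ℤ)| + |(psi l.prod).m - (p₂ : ℤ)| := abs_add_le _ _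
          _ ≤ (a₁ : ℤ) + a₂ := by omega
      · rw [List.prod_cons, map_mul, W_mul_m]
        push_cast
        calc |(psiC t).m + (psiC l.prod).m| ≤ |(psiC t).m| + |(psiC l.prod).m| := abs_add_le _ _
          _ ≤ (c₁ : ℤ) + c₂ := by omega
      · intro s
        rw [List.prod_cons, map_mul, W_mul_f, shiftF_add, offSum_add, shiftF_shiftF]
        have h₁ := ho₁ s
        have h₂ := ho₂ ((psi t).m + s)
        push_cast
        omega

lemma offSum_g (n k : ℕ) :
    offSum ((5 ^ (2 * n) : ℕ) : ℤ)
      (shiftF 0 ((psi (gc ^ k * ga ^ (5 ^ (2 * n)) * gb ^ (5 ^ (2 * n)))).f)) = 0 := by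
  rw [map_mul, map_mul, map_pow, psi_c, one_pow, psi_ga_pow, psi_gb_pow,
    shiftF_zero_shift]
  simp only [W_mul_f, W_mul_m, W_one_f, W_one_m, shiftF_zero, shiftF_zero_shift,
    zero_add, add_zero, shiftF_single]
  rw [offSum_single, if_pos rfl]

lemma psi_g_m (n k : ℕ) :
    (psi (gc ^ k * ga ^ (5 ^ (2 * n)) * gb ^ (5 ^ (2 * n)))).m = ((5 ^ (2 * n) : ℕ) : ℤ) := by
  rw [map_mul, map_mul, map_pow, psi_c, one_pow, psi_ga_pow, psi_gb_pow]
  simp only [W_mul_m, W_one_m, zero_add, add_zero]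

lemma psiC_g_m (n k : ℕ) :
    (psiC (gc ^ k * ga ^ (5 ^ (2 * n)) * gb ^ (5 ^ (2 * n)))).m = (k : ℤ) := by
  rw [map_mul, map_mul, map_pow, map_pow, map_pow, psiC_a, psiC_b, psiC_c,
    one_pow, W_pow_a]
  simp only [W_mul_m, W_one_m, zero_add, add_zero]

lemma lower_bound (k n : ℕ) (hn : 2 ≤ n) (l : List F3) (hmem : ∀ t ∈ l, t ∈ Xgen)
    (hprod : l.prod = gc ^ k * ga ^ (5 ^ (2 * n)) * gb ^ (5 ^ (2 * n))) :
    k + 5 ^ (2 * n - 1) + 1 ≤ l.length := by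
  obtain ⟨p, q, a1, b1, c1, x1, e, hq, hx, hm, hc, ho⟩ :=
    goodL_list ((5 ^ (2 * n) : ℕ) : ℤ) l hmem
  rw [hprod, psi_g_m] at hm
  rw [hprod, psiC_g_m] at hc
  have ho0 := ho 0
  rw [hprod, offSum_g] at ho0
  -- convert everything to ℕ facts
  have hM : (5 : ℕ) ^ (2 * n) = 5 * 5 ^ (2 * n - 1) := by
    have h : 2 * n - 1 + 1 = 2 * n := by omega
    rw [← h, pow_succ]; exact mul_comm _ _
  have hM1 : 1 ≤ (5 : ℕ) ^ (2 * n - 1) := Nat.one_le_pow _ _ (by norm_num)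
  rw [abs_le] at hm hc
  obtain ⟨hm1, hm2⟩ := hm
  obtain ⟨-, hc2⟩ := hc
  have hk : (k : ℤ) ≤ (c1 : ℤ) := hc2
  have hqb : (q : ℤ) ≤ (b1 : ℤ) := by omega
  have hmn1 : ((5 ^ (2*n) : ℕ) : ℤ) - (p : ℤ) ≤ (a1 : ℤ) := by omega
  omega

lemma upper_list (k n : ℕ) (hn : 2 ≤ n) :
    ∃ l : List F3, (∀ x ∈ l, x ∈ Xgen) ∧
      l.prod = gc ^ k * ga ^ (5 ^ (2 * n)) * gb ^ (5 ^ (2 * n)) ∧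
      l.length = k + 5 ^ (2 * n - 1) + 1 := by
  refine ⟨List.replicate k gc ++ List.replicate (5 ^ (2 * n - 1)) gb⁻¹ ++ [xgen 1 n],
    ?_, ?_, ?_⟩
  · intro x hx
    simp only [List.mem_append, List.mem_replicate, List.mem_singleton] at hx
    rcases hx with (⟨-, rfl⟩ | ⟨-, rfl⟩) | rfl
    · exact Or.inr (by simp [Sgen])
    · exact Or.inr (by simp [Sgen])
    · refine Or.inl ?_
      simp only [Xinf, Set.mem_iUnion, Set.mem_setOf_eq]
      exact ⟨n, hn, 1, by rw [FreeGroup.norm_one]; positivity, rfl⟩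
  · rw [List.prod_append, List.prod_append, List.prod_replicate, List.prod_replicate,
      List.prod_singleton, xgen]
    group
  · simp [List.length_append, List.length_replicate]
    ring

lemma main_lemma (k n : ℕ) (hn : 2 ≤ n) :
    wordLen Xgen (gc ^ k * ga ^ (5 ^ (2 * n)) * gb ^ (5 ^ (2 * n)))
      = k + 5 ^ (2 * n - 1) + 1 := by
  obtain ⟨l, h1, h2, h3⟩ := upper_list k n hn
  have hmem : k + 5 ^ (2 * n - 1) + 1 ∈
      {m : ℕ | ∃ l : List F3, (∀ x ∈ l, x ∈ Xgen) ∧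
        l.prod = gc ^ k * ga ^ (5 ^ (2 * n)) * gb ^ (5 ^ (2 * n)) ∧ l.length = m} :=
    ⟨l, h1, h2, h3⟩
  refine le_antisymm (Nat.sInf_le hmem) (le_csInf ⟨_, hmem⟩ ?_)
  rintro m ⟨l', hl1, hl2, rfl⟩
  exact lower_bound k n hn l' hl1 hl2

end

/-- Proposition 3.5(i): `|c^k a^(5^(2n)) b^(5^(2n))|_X = k + 5^(2n-1) + 1`; in
particular (`k = 0`) `|a^(5^(2n)) b^(5^(2n))|_X = 5^(2n-1) + 1`. -/
theorem wordLen_cab (k n : ℕ) (hn : 2 ≤ n) :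
    wordLen Xgen (gc ^ k * ga ^ (5 ^ (2 * n)) * gb ^ (5 ^ (2 * n)))
      = k + 5 ^ (2 * n - 1) + 1 ∧
    wordLen Xgen (ga ^ (5 ^ (2 * n)) * gb ^ (5 ^ (2 * n))) = 5 ^ (2 * n - 1) + 1 := by
  refine ⟨main_lemma k n hn, ?_⟩
  have h := main_lemma 0 n hn
  rwa [pow_zero, one_mul, Nat.zero_add] at h
end

section
/- Let k₁ ≥ 0, k₂ ≥ 1 and n ≥ 2 be natural numbers. Then the X-word length of c^{k₁} a^{5^{2n}} b^{5^{2n}} c^{k₂} in F₃ equals k₁ + 5^{2n−1} + 1 + k₂, i.e. |c^{k₁} a^{5^{2n}} b^{5^{2n}} c^{k₂}|_X = k₁ + 5^{2n−1} + 1 + k₂. -/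
/-! ### auxiliary wreath-type group -/

structure GW where
  f : ℤ → ℤ
  d : ℤ

namespace GW
@[ext] theorem ext' {u v : GW} (h1 : u.f = v.f) (h2 : u.d = v.d) : u = v := by
  cases u; cases v; simp_all
instance : Mul GW := ⟨fun u v => ⟨fun p => u.f p + v.f (p - u.d), u.d + v.d⟩⟩
instance : One GW := ⟨⟨fun _ => 0, 0⟩⟩
instance : Inv GW := ⟨fun u => ⟨fun p => - u.f (p + u.d), - u.d⟩⟩
@[simp] theorem mk_f (f : ℤ → ℤ) (d : ℤ) (p : ℤ) : (GW.mk f d).f p = f p := rfl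
@[simp] theorem mk_d (f : ℤ → ℤ) (d : ℤ) : (GW.mk f d).d = d := rfl
@[simp] theorem mul_f (u v : GW) (p : ℤ) : (u * v).f p = u.f p + v.f (p - u.d) := rfl
@[simp] theorem mul_d (u v : GW) : (u * v).d = u.d + v.d := rfl
@[simp] theorem one_f (p : ℤ) : (1 : GW).f p = 0 := rfl
@[simp] theorem one_d : (1 : GW).d = 0 := rfl
@[simp] theorem inv_f (u : GW) (p : ℤ) : (u⁻¹).f p = - u.f (p + u.d) := rfl
@[simp] theorem inv_d (u : GW) : (u⁻¹).d = - u.d := rfl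
instance : Group GW where
  mul_assoc u v w := by ext p <;> simp <;> ring_nf
  one_mul u := by ext p <;> simp
  mul_one u := by ext p <;> simp
  inv_mul_cancel u := by ext p <;> simp
end GW

noncomputable def ρ : F3 →* GW :=
  FreeGroup.lift ![⟨fun _ => 0, 1⟩, ⟨fun p => if p = 0 then 1 else 0, 0⟩, 1]

noncomputable def eHom (i : Fin 3) : F3 →* Multiplicative ℤ :=
  FreeGroup.lift (fun j => Multiplicative.ofAdd (if j = i then 1 else 0))
noncomputable def φa : F3 →* Multiplicative ℤ := eHom 0
noncomputable def φb : F3 →* Multiplicative ℤ := eHom 1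
noncomputable def φc : F3 →* Multiplicative ℤ := eHom 2

@[simp] theorem φa_a : (φa ga).toAdd = 1 := by simp [φa, eHom, ga]
@[simp] theorem φa_b : (φa gb).toAdd = 0 := by simp [φa, eHom, gb]
@[simp] theorem φa_c : (φa gc).toAdd = 0 := by simp [φa, eHom, gc]
@[simp] theorem φb_a : (φb ga).toAdd = 0 := by simp [φb, eHom, ga]
@[simp] theorem φb_b : (φb gb).toAdd = 1 := by simp [φb, eHom, gb]
@[simp] theorem φb_c : (φb gc).toAdd = 0 := by simp [φb, eHom, gc]
@[simp] theorem φc_a : (φc ga).toAdd = 0 := by simp [φc, eHom, ga]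
@[simp] theorem φc_b : (φc gb).toAdd = 0 := by simp [φc, eHom, gb]
@[simp] theorem φc_c : (φc gc).toAdd = 1 := by simp [φc, eHom, gc]

@[simp] theorem ρ_a : ρ ga = ⟨fun _ => 0, 1⟩ := by simp [ρ, ga]
@[simp] theorem ρ_b : ρ gb = ⟨fun p => if p = 0 then 1 else 0, 0⟩ := by simp [ρ, gb]
@[simp] theorem ρ_c : ρ gc = 1 := by simp [ρ, gc]

theorem ρ_a_pow (k : ℕ) : ρ (ga ^ k) = ⟨fun _ => 0, k⟩ := by
  induction k with
  | zero => simp; rfl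
  | succ k ih => rw [pow_succ, map_mul, ih, ρ_a]; ext p <;> simp <;> push_cast <;> ring

theorem ρ_b_pow (k : ℕ) : ρ (gb ^ k) = ⟨fun p => if p = 0 then (k : ℤ) else 0, 0⟩ := by
  induction k with
  | zero => simp; rfl
  | succ k ih =>
    rw [pow_succ, map_mul, ih, ρ_b]; ext p <;> simp
    split <;> simp

theorem abs_prod_le (L : List (Multiplicative ℤ)) (h : ∀ x ∈ L, |x.toAdd| ≤ 1) :
    |L.prod.toAdd| ≤ (L.length : ℤ) := by
  induction L with
  | nil => simp
  | cons x L ih =>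
    have h1 : |x.toAdd| ≤ 1 := h x (by simp)
    have h2 := ih (fun y hy => h y (by simp [hy]))
    have h3 : (x :: L).prod.toAdd = x.toAdd + L.prod.toAdd := by simp
    rw [h3]
    calc |x.toAdd + L.prod.toAdd| ≤ |x.toAdd| + |L.prod.toAdd| := abs_add_le _ _
    _ ≤ 1 + L.length := by omega
    _ ≤ _ := by simp; omega

theorem abs_eHom_le_norm (i : Fin 3) (v : F3) : |(eHom i v).toAdd| ≤ (v.norm : ℤ) := by
  have hv : v = FreeGroup.mk v.toWord := (FreeGroup.mk_toWord).symm
  rw [hv, eHom, FreeGroup.lift_mk]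
  have h4 : FreeGroup.norm (FreeGroup.mk v.toWord) = v.toWord.length := by
    rw [FreeGroup.mk_toWord]; rfl
  rw [h4]
  have := abs_prod_le (v.toWord.map fun x => cond x.2 (Multiplicative.ofAdd (if x.1 = i then (1:ℤ) else 0)) (Multiplicative.ofAdd (if x.1 = i then (1:ℤ) else 0))⁻¹) ?_
  · simpa using this
  · intro x hx
    simp only [List.mem_map] at hx
    obtain ⟨y, _, rfl⟩ := hx
    cases y.2 <;> simp <;> split <;> simp

noncomputable def dHom : GW →* Multiplicative ℤ where
  toFun u := Multiplicative.ofAdd u.d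
  map_one' := rfl
  map_mul' u v := by simp [← ofAdd_add]

theorem ρ_d_eq_φa (v : F3) : (ρ v).d = (φa v).toAdd := by
  have h : dHom.comp ρ = φa := by
    apply FreeGroup.ext_hom
    intro a
    fin_cases a <;> simp [dHom, φa, eHom, ρ]
  calc (ρ v).d = (dHom.comp ρ v).toAdd := rfl
  _ = (φa v).toAdd := by rw [h]

theorem abs_ρ_d_le_norm (v : F3) : |(ρ v).d| ≤ (v.norm : ℤ) := by
  rw [ρ_d_eq_φa]; exact abs_eHom_le_norm 0 v

theorem ρ_xgen (v : F3) (j : ℕ) :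
    ρ (xgen v j) = ⟨fun r =>
      (if r = (ρ v).d then ((5:ℤ)^(2*j-1)) else 0) +
      (if r = ((5:ℤ)^(2*j)) then (5:ℤ)^(2*j) else 0), (5:ℤ)^(2*j)⟩ := by
  have h1 := ρ_b_pow (5 ^ (2 * j - 1))
  have h2 := ρ_b_pow (5 ^ (2 * j))
  have h3 := ρ_a_pow (5 ^ (2 * j))
  ext r
  · simp only [xgen, map_mul, map_inv, h1, h2, h3, GW.mul_f, GW.mul_d, GW.inv_f, GW.inv_d,
      GW.one_f, GW.one_d]
    push_cast
    ring_nf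
    split_ifs <;> push_cast <;> ring_nf <;> omega
  · simp [xgen, map_mul, h1, h2, h3]

theorem φb_xgen (v : F3) (j : ℕ) :
    (φb (xgen v j)).toAdd = (5:ℤ)^(2*j-1) + (5:ℤ)^(2*j) := by
  simp [xgen, map_mul, map_pow, map_inv]

theorem φc_xgen (v : F3) (j : ℕ) : (φc (xgen v j)).toAdd = 0 := by
  simp [xgen, map_mul, map_pow, map_inv]

theorem φa_xgen (v : F3) (j : ℕ) :
    (φa (xgen v j)).toAdd = (5:ℤ)^(2*j) := by
  simp [xgen, map_mul, map_pow, map_inv]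

theorem ne_c_of_hom {w : F3} (h : (φc w).toAdd = 0 ∧ ((φa w).toAdd ≠ 0 ∨ (φb w).toAdd ≠ 0)) :
    ¬(w = gc ∨ w = gc⁻¹) := by
  rintro (rfl | rfl) <;> simp_all [map_inv]

theorem xgen_ne_c (v : F3) (j : ℕ) (hj : 1 ≤ j) : ¬(xgen v j = gc ∨ xgen v j = gc⁻¹) := by
  apply ne_c_of_hom
  refine ⟨φc_xgen v j, Or.inl ?_⟩
  rw [φa_xgen]
  exact pow_ne_zero _ (by norm_num)

/-- the predicate singling out the letters `c, c⁻¹` -/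
noncomputable def isC (w : F3) : Bool := @decide (w = gc ∨ w = gc⁻¹) (Classical.dec _)

theorem isC_c : isC gc = true := by simp [isC]
theorem isC_cinv : isC gc⁻¹ = true := by simp [isC]
theorem isC_a : isC ga = false := by
  simp only [isC, decide_eq_false_iff_not]
  exact ne_c_of_hom ⟨by simp, Or.inl (by simp)⟩
theorem isC_b : isC gb = false := by
  simp only [isC, decide_eq_false_iff_not]
  exact ne_c_of_hom ⟨by simp, Or.inr (by simp)⟩
theorem isC_ainv : isC ga⁻¹ = false := by
  simp only [isC, decide_eq_false_iff_not]
  exact ne_c_of_hom ⟨by simp [map_inv], Or.inl (by simp [map_inv])⟩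
theorem isC_binv : isC gb⁻¹ = false := by
  simp only [isC, decide_eq_false_iff_not]
  exact ne_c_of_hom ⟨by simp [map_inv], Or.inr (by simp [map_inv])⟩
theorem isC_xgen (v : F3) (j : ℕ) (hj : 1 ≤ j) : isC (xgen v j) = false := by
  simp only [isC, decide_eq_false_iff_not]
  exact xgen_ne_c v j hj

/-- A feasibility certificate ("plan") for the lower bound bookkeeping. -/
def planOK (T x μ d V : ℤ) : Prop :=
  ∃ m P ws wb J sa s1 s2 : ℤ,
    0 ≤ m ∧ 0 ≤ P ∧ 0 ≤ ws ∧ 0 ≤ wb ∧ 0 ≤ J ∧ J ≤ wb ∧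
    5*ws + wb ≤ 5*P ∧ (0 < P → 1 ≤ m) ∧
    wb - J ≤ sa ∧ wb - J + (d + J - T) ≤ sa ∧
    T - x - ws - wb ≤ s1 ∧ -(T - x - ws - wb) ≤ s1 ∧
    x + ws + wb - μ - 6*P ≤ s2 ∧ -(x + ws + wb - μ - 6*P) ≤ s2 ∧
    m + sa + s1 + s2 ≤ V

theorem lemA (N : ℤ) (tgt : F3)
    (h1 : (ρ tgt).f N = N) (h2 : (φb tgt).toAdd = N) (h3 : (ρ tgt).d = N) :
    ∀ l : List F3, (∀ w ∈ l, w ∈ Xgen) → ∀ p : F3, p * l.prod = tgt →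
      planOK N ((ρ p).f N) ((φb p).toAdd) ((ρ p).d)
        (l.countP (fun w => !isC w) : ℤ) := by
  intro l
  induction l with
  | nil =>
    intro _ p hp
    rw [List.prod_nil, mul_one] at hp
    subst hp
    refine ⟨0,0,0,0,0,0,0,0, ?_⟩
    rw [h1, h2, h3]
    norm_num
  | cons w l ih =>
    intro hmem p hp
    have hp' : (p * w) * l.prod = tgt := by
      rw [mul_assoc]; simpa [List.prod_cons] using hp
    have IH := ih (fun x hx => hmem x (by simp [hx])) (p * w) hp'
    have hx' : (ρ (p*w)).f N = (ρ p).f N + (ρ w).f (N - (ρ p).d) := by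
      rw [map_mul]; rfl
    have hd' : (ρ (p*w)).d = (ρ p).d + (ρ w).d := by
      rw [map_mul]; rfl
    have hμ' : (φb (p*w)).toAdd = (φb p).toAdd + (φb w).toAdd := by
      rw [map_mul]; rfl
    rw [hx', hd', hμ'] at IH
    set x := (ρ p).f N with hxdef
    set d := (ρ p).d with hddef
    set μ := (φb p).toAdd with hμdef
    have hw := hmem w (by simp)
    rcases hw with hw | hw
    · -- w ∈ Xinf
      simp only [Xinf, Set.mem_iUnion, Set.mem_setOf_eq] at hw
      obtain ⟨j, hj, v, hv, rfl⟩ := hw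
      have hcount : ((xgen v j :: l).countP (fun w => !isC w) : ℤ)
          = (l.countP (fun w => !isC w) : ℤ) + 1 := by
        rw [List.countP_cons]
        simp [isC_xgen v j (by omega)]
      rw [hcount]
      rw [ρ_xgen, φb_xgen] at IH
      simp only [GW.mk_f, GW.mk_d] at IH
      set e := (ρ v).d with hedef
      set p5 : ℤ := (5:ℤ)^(2*j-1) with hp5
      set q5 : ℤ := (5:ℤ)^(2*j) with hq5
      have hq5p5 : q5 = 5 * p5 := by
        rw [hq5, hp5, ← pow_succ']
        congr 1
        omega
      have hp5pos : 1 ≤ p5 := by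
        have : 0 < p5 := by rw [hp5]; positivity
        omega
      have he : |e| < q5 := by
        calc |e| ≤ (v.norm : ℤ) := abs_ρ_d_le_norm v
        _ ≤ ((5^j : ℕ) : ℤ) := by exact_mod_cast hv
        _ < q5 := by
          rw [hq5]
          have : (5:ℕ)^j < 5^(2*j) := Nat.pow_lt_pow_right (by norm_num) (by omega)
          exact_mod_cast this
      obtain ⟨m,P,ws,wb,J,sa,s1,s2, c1,c2,c3,c4,c5,c6,c7,c8,c9,c10,c11,c12,c13,c14,c15⟩ := IH
      have c8' : P ≤ 0 ∨ 1 ≤ m := by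
        rcases lt_or_ge 0 P with h | h
        · exact Or.inr (c8 h)
        · exact Or.inl h
      clear c8
      by_cases hS : N - d = e
      · -- small lamp hits position N
        have hB : ¬ (N - d = q5) := by
          intro hB
          have h5 : e < q5 := lt_of_abs_lt he
          omega
        simp only [if_pos hS, if_neg hB] at c11 c12 c13 c14
        refine ⟨m+1, P+p5, ws+p5, wb, J, sa, s1, s2, by omega, by omega, by omega, by omega,
          by omega, by omega, by omega, by omega, by omega, by omega, by omega, by omega,
          by omega, by omega, by omega⟩
      · by_cases hB : N - d = q5
        · -- big lamp hits position N
          simp only [if_neg hS, if_pos hB] at c11 c12 c13 c14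
          refine ⟨m+1, P+p5, ws, wb+q5, q5, sa, s1, s2, by omega, by omega, by omega, by omega,
            by omega, by omega, by omega, by omega, by omega, by omega, by omega, by omega,
            by omega, by omega, by omega⟩
        · -- no hit
          simp only [if_neg hS, if_neg hB] at c11 c12 c13 c14
          refine ⟨m+1, P+p5, ws, wb, J, sa, s1, s2, by omega, by omega, by omega, by omega,
            by omega, by omega, by omega, by omega, by omega, by omega, by omega, by omega,
            by omega, by omega, by omega⟩
    · -- w ∈ Sgen
      simp only [Sgen, Set.mem_insert_iff, Set.mem_singleton_iff] at hw
      rcases hw with rfl | rfl | rfl | rfl | rfl | rfl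
      · -- ga
        simp only [ρ_a, GW.mk_f, GW.mk_d, φb_a, add_zero] at IH
        obtain ⟨m,P,ws,wb,J,sa,s1,s2, c1,c2,c3,c4,c5,c6,c7,c8,c9,c10,c11,c12,c13,c14,c15⟩ := IH
        rw [List.countP_cons]
        simp only [isC_a, Bool.not_false, Bool.not_true, if_true, if_false]
        push_cast
        exact ⟨m, P, ws, wb, J, sa+1, s1, s2, c1,c2,c3,c4,c5,c6,c7,c8, by omega, by omega,
          by omega, by omega, by omega, by omega, by omega⟩
      · -- gb
        simp only [ρ_b, GW.mk_f, GW.mk_d, φb_b, add_zero] at IH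
        obtain ⟨m,P,ws,wb,J,sa,s1,s2, c1,c2,c3,c4,c5,c6,c7,c8,c9,c10,c11,c12,c13,c14,c15⟩ := IH
        rw [List.countP_cons]
        simp only [isC_b, Bool.not_false, Bool.not_true, if_true, if_false]
        push_cast
        by_cases hT : N - d = 0
        · simp only [if_pos hT] at c11 c12 c13 c14
          exact ⟨m, P, ws, wb, J, sa, s1+1, s2, c1,c2,c3,c4,c5,c6,c7,c8, by omega, by omega,
            by omega, by omega, by omega, by omega, by omega⟩
        · simp only [if_neg hT] at c11 c12 c13 c14
          exact ⟨m, P, ws, wb, J, sa, s1, s2+1, c1,c2,c3,c4,c5,c6,c7,c8, by omega, by omega,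
            by omega, by omega, by omega, by omega, by omega⟩
      · -- gc
        simp only [ρ_c, GW.one_f, GW.one_d, φb_c, add_zero] at IH
        obtain ⟨m,P,ws,wb,J,sa,s1,s2, c1,c2,c3,c4,c5,c6,c7,c8,c9,c10,c11,c12,c13,c14,c15⟩ := IH
        rw [List.countP_cons]
        simp only [isC_c, Bool.not_false, Bool.not_true, if_true, if_false]
        push_cast
        exact ⟨m, P, ws, wb, J, sa, s1, s2, c1,c2,c3,c4,c5,c6,c7,c8, by omega, by omega,
          by omega, by omega, by omega, by omega, by omega⟩
      · -- ga⁻¹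
        have hbinv : (φb ga⁻¹).toAdd = 0 := by simp [map_inv]
        have hρ : ρ ga⁻¹ = GW.mk (fun _ => 0) (-1) := by
          rw [map_inv, ρ_a]; ext q <;> simp
        simp only [hρ, hbinv, GW.mk_f, GW.mk_d, add_zero] at IH
        obtain ⟨m,P,ws,wb,J,sa,s1,s2, c1,c2,c3,c4,c5,c6,c7,c8,c9,c10,c11,c12,c13,c14,c15⟩ := IH
        rw [List.countP_cons]
        simp only [isC_ainv, Bool.not_false, Bool.not_true, if_true, if_false]
        push_cast
        exact ⟨m, P, ws, wb, J, sa+1, s1, s2, c1,c2,c3,c4,c5,c6,c7,c8, by omega, by omega,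
          by omega, by omega, by omega, by omega, by omega⟩
      · -- gb⁻¹
        have hbinv : (φb gb⁻¹).toAdd = -1 := by simp [map_inv]
        have hρ : ρ gb⁻¹ = GW.mk (fun q => if q = 0 then -1 else 0) 0 := by
          rw [map_inv, ρ_b]; ext q
          · simp only [GW.inv_f, GW.mk_f, GW.mk_d, add_zero]
            split_ifs <;> simp
          · simp
        simp only [hρ, hbinv, GW.mk_f, GW.mk_d, add_zero] at IH
        obtain ⟨m,P,ws,wb,J,sa,s1,s2, c1,c2,c3,c4,c5,c6,c7,c8,c9,c10,c11,c12,c13,c14,c15⟩ := IH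
        rw [List.countP_cons]
        simp only [isC_binv, Bool.not_false, Bool.not_true, if_true, if_false]
        push_cast
        by_cases hT : N - d = 0
        · simp only [if_pos hT] at c11 c12 c13 c14
          exact ⟨m, P, ws, wb, J, sa, s1+1, s2, c1,c2,c3,c4,c5,c6,c7,c8, by omega, by omega,
            by omega, by omega, by omega, by omega, by omega⟩
        · simp only [if_neg hT] at c11 c12 c13 c14
          exact ⟨m, P, ws, wb, J, sa, s1, s2+1, c1,c2,c3,c4,c5,c6,c7,c8, by omega, by omega,
            by omega, by omega, by omega, by omega, by omega⟩
      · -- gc⁻¹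
        have hbinv : (φb gc⁻¹).toAdd = 0 := by simp [map_inv]
        have hρ : ρ gc⁻¹ = 1 := by rw [map_inv, ρ_c, inv_one]
        simp only [hρ, hbinv, GW.one_f, GW.one_d, add_zero] at IH
        obtain ⟨m,P,ws,wb,J,sa,s1,s2, c1,c2,c3,c4,c5,c6,c7,c8,c9,c10,c11,c12,c13,c14,c15⟩ := IH
        rw [List.countP_cons]
        simp only [isC_cinv, Bool.not_false, Bool.not_true, if_true, if_false]
        push_cast
        exact ⟨m, P, ws, wb, J, sa, s1, s2, c1,c2,c3,c4,c5,c6,c7,c8, by omega, by omega,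
          by omega, by omega, by omega, by omega, by omega⟩

theorem lemB (T' V : ℤ) (hT' : 1 ≤ T') (h : planOK (5*T') 0 0 0 V) : T' + 1 ≤ V := by
  obtain ⟨m,P,ws,wb,J,sa,s1,s2, c1,c2,c3,c4,c5,c6,c7,c8,c9,c10,c11,c12,c13,c14,c15⟩ := h
  have c8' : P ≤ 0 ∨ 1 ≤ m := by
    rcases lt_or_ge 0 P with h | h
    · exact Or.inr (c8 h)
    · exact Or.inl h
  omega

theorem lemC : ∀ l : List F3, (∀ w ∈ l, w ∈ Xgen) →
    |(φc l.prod).toAdd| ≤ (l.countP (fun w => isC w) : ℤ) := by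
  intro l
  induction l with
  | nil => simp
  | cons w l ih =>
    intro hmem
    have h1 := ih (fun x hx => hmem x (by simp [hx]))
    have h2 : (φc (w :: l).prod).toAdd = (φc w).toAdd + (φc l.prod).toAdd := by
      rw [List.prod_cons, map_mul]; rfl
    rw [h2, List.countP_cons]
    have hw := hmem w (by simp)
    have key : |(φc w).toAdd| ≤ (if isC w then 1 else 0 : ℤ) := by
      by_cases hC : w = gc ∨ w = gc⁻¹
      · have : isC w = true := by simp [isC, hC]
        rw [this, if_pos rfl]
        rcases hC with rfl | rfl
        · simp
        · rw [map_inv]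
          simp
      · have : isC w = false := by simp [isC, hC]
        rw [this]
        simp only [if_false, Bool.false_eq_true]
        rcases hw with hw | hw
        · simp only [Xinf, Set.mem_iUnion, Set.mem_setOf_eq] at hw
          obtain ⟨j, hj, v, hv, rfl⟩ := hw
          rw [φc_xgen]
          simp
        · simp only [Sgen, Set.mem_insert_iff, Set.mem_singleton_iff] at hw
          push_neg at hC
          rcases hw with rfl | rfl | rfl | rfl | rfl | rfl
          · simp
          · simp
          · exact absurd rfl hC.1
          · rw [map_inv]; simp
          · rw [map_inv]; simp
          · exact absurd rfl hC.2
    calc |(φc w).toAdd + (φc l.prod).toAdd| ≤ |(φc w).toAdd| + |(φc l.prod).toAdd| := abs_add_le _ _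
    _ ≤ (if isC w then 1 else 0 : ℤ) + (l.countP (fun w => isC w) : ℤ) := by
        exact add_le_add key h1
    _ ≤ _ := by
        push_cast
        split_ifs <;> omega

theorem ρ_tgt (k₁ k₂ Nn : ℕ) : ρ (gc ^ k₁ * ga ^ Nn * gb ^ Nn * gc ^ k₂) =
    GW.mk (fun p => if p - Nn = 0 then (Nn:ℤ) else 0) Nn := by
  rw [map_mul, map_mul, map_mul, map_pow ρ gc, map_pow ρ gc, ρ_c, one_pow,
    ρ_a_pow, ρ_b_pow]
  ext p <;> simp

theorem φb_tgt (k₁ k₂ Nn : ℕ) :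
    (φb (gc ^ k₁ * ga ^ Nn * gb ^ Nn * gc ^ k₂)).toAdd = (Nn : ℤ) := by
  simp [map_mul, map_pow]

theorem φc_tgt (k₁ k₂ Nn : ℕ) :
    (φc (gc ^ k₁ * ga ^ Nn * gb ^ Nn * gc ^ k₂)).toAdd = (k₁ : ℤ) + k₂ := by
  simp [map_mul, map_pow]

theorem upper_mem (k₁ k₂ n : ℕ) (hn : 2 ≤ n) :
    ∀ x ∈ (List.replicate k₁ gc ++ (List.replicate (5^(2*n-1)) gb⁻¹ ++
      ([xgen 1 n] ++ List.replicate k₂ gc))), x ∈ Xgen := by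
  intro x hx
  simp only [List.mem_append, List.mem_replicate, List.mem_singleton] at hx
  rcases hx with ⟨_, rfl⟩ | ⟨⟨_, rfl⟩ | (rfl | ⟨_, rfl⟩)⟩
  · exact Or.inr (by simp [Sgen])
  · exact Or.inr (by simp [Sgen])
  · refine Or.inl ?_
    simp only [Xinf, Set.mem_iUnion, Set.mem_setOf_eq]
    exact ⟨n, hn, 1, by simp, rfl⟩
  · exact Or.inr (by simp [Sgen])

theorem upper_prod (k₁ k₂ n : ℕ) :
    (List.replicate k₁ gc ++ (List.replicate (5^(2*n-1)) gb⁻¹ ++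
      ([xgen 1 n] ++ List.replicate k₂ gc))).prod
      = gc ^ k₁ * ga ^ (5 ^ (2 * n)) * gb ^ (5 ^ (2 * n)) * gc ^ k₂ := by
  rw [List.prod_append, List.prod_append, List.prod_append, List.prod_replicate,
    List.prod_replicate, List.prod_replicate, List.prod_singleton]
  rw [xgen]
  group

theorem wordLen_cabc' (k₁ k₂ n : ℕ) (hk₂ : 1 ≤ k₂) (hn : 2 ≤ n) :
    wordLen Xgen (gc ^ k₁ * ga ^ (5 ^ (2 * n)) * gb ^ (5 ^ (2 * n)) * gc ^ k₂)
      = k₁ + 5 ^ (2 * n - 1) + 1 + k₂ := by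
  set tgt : F3 := gc ^ k₁ * ga ^ (5 ^ (2 * n)) * gb ^ (5 ^ (2 * n)) * gc ^ k₂ with htgt
  have hNT : (5:ℕ) ^ (2*n) = 5 * 5 ^ (2*n-1) := by
    rw [← pow_succ']
    congr 1
    omega
  have hwitness : ∃ l : List F3, (∀ x ∈ l, x ∈ Xgen) ∧ l.prod = tgt ∧
      l.length = k₁ + 5 ^ (2 * n - 1) + 1 + k₂ := by
    refine ⟨_, upper_mem k₁ k₂ n hn, upper_prod k₁ k₂ n, ?_⟩
    simp [List.length_append, List.length_replicate]
    omega
  apply le_antisymm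
  · apply Nat.sInf_le
    obtain ⟨l, h1, h2, h3⟩ := hwitness
    exact ⟨l, h1, h2, h3⟩
  · apply le_csInf
    · obtain ⟨l, h1, h2, h3⟩ := hwitness
      exact ⟨_, l, h1, h2, h3⟩
    · rintro b ⟨l, hmem, hprod, rfl⟩
      -- c-letters count
      have hC : (k₁ : ℤ) + k₂ ≤ (l.countP (fun w => isC w) : ℤ) := by
        have := lemC l hmem
        rw [hprod, htgt, φc_tgt] at this
        have habs : (k₁:ℤ) + k₂ ≤ |(k₁:ℤ) + k₂| := le_abs_self _
        omega
      -- non-c letters count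
      have f1 : (ρ tgt).f ((5^(2*n):ℕ) : ℤ) = ((5^(2*n):ℕ) : ℤ) := by
        rw [htgt, ρ_tgt]; simp
      have f2 : (φb tgt).toAdd = ((5^(2*n):ℕ) : ℤ) := by
        rw [htgt]; exact φb_tgt k₁ k₂ _
      have f3 : (ρ tgt).d = ((5^(2*n):ℕ) : ℤ) := by
        rw [htgt, ρ_tgt]
      have hNC : (5:ℤ) ^ (2*n-1) + 1 ≤ (l.countP (fun w => !isC w) : ℤ) := by
        have hA := lemA ((5^(2*n):ℕ) : ℤ) tgt f1 f2 f3 l hmem 1 (by rw [one_mul, hprod])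
        rw [map_one, map_one] at hA
        simp only [GW.one_f, GW.one_d] at hA
        have ht1 : (1 : Multiplicative ℤ).toAdd = (0:ℤ) := rfl
        rw [ht1] at hA
        have hcast : ((5 ^ (2*n) : ℕ) : ℤ) = 5 * ((5:ℤ)^(2*n-1)) := by
          rw [hNT]; push_cast; ring
        rw [hcast] at hA
        have h1p : (1:ℤ) ≤ (5:ℤ)^(2*n-1) := by
          have : (0:ℤ) < (5:ℤ)^(2*n-1) := by positivity
          omega
        have := lemB ((5:ℤ)^(2*n-1)) _ h1p hA
        omega
      have hlen : l.length = l.countP (fun w => isC w) + l.countP (fun w => !isC w) := by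
        rw [List.length_eq_countP_add_countP (fun w => isC w)]
        congr 1
        apply List.countP_congr
        intro a _
        cases h : isC a <;> simp [h]
      have h5 : ((5:ℕ)^(2*n-1) : ℤ) = (5:ℤ)^(2*n-1) := by push_cast; ring
      omega

/-- Proposition 3.5(ii): `|c^(k₁) a^(5^(2n)) b^(5^(2n)) c^(k₂)|_X = k₁ + 5^(2n-1) + 1 + k₂`. -/
theorem wordLen_cabc (k₁ k₂ n : ℕ) (hk₂ : 1 ≤ k₂) (hn : 2 ≤ n) :
    wordLen Xgen (gc ^ k₁ * ga ^ (5 ^ (2 * n)) * gb ^ (5 ^ (2 * n)) * gc ^ k₂)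
      = k₁ + 5 ^ (2 * n - 1) + 1 + k₂ := wordLen_cabc' k₁ k₂ n hk₂ hn
end

section
/- Let j ≥ 1 and u ∈ F₃, and let k ≥ 2 be a natural number with k > j and 5^k ≥ |u|. Then the X-word length satisfies |a^{5^{2j}} b^{5^{2j}} · u · a^{5^{2k}} b^{5^{2k}}|_X ≤ 5^{2k−1} + |u|_X + 1. -/
lemma exists_S_word (u : F3) : ∃ l : List F3, (∀ x ∈ l, x ∈ Sgen) ∧ l.prod = u := by
  induction u using FreeGroup.induction_on with
  | C1 => exact ⟨[], by simp, by simp⟩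
  | of i =>
    refine ⟨[FreeGroup.of i], ?_, List.prod_singleton⟩
    intro x hx
    simp only [List.mem_singleton] at hx
    subst hx
    fin_cases i
    · exact Or.inl rfl
    · exact Or.inr (Or.inl rfl)
    · exact Or.inr (Or.inr (Or.inl rfl))
  | inv_of i _ =>
    refine ⟨[(FreeGroup.of i)⁻¹], ?_, List.prod_singleton⟩
    intro x hx
    simp only [List.mem_singleton] at hx
    subst hx
    fin_cases i
    · exact Or.inr (Or.inr (Or.inr (Or.inl rfl)))
    · exact Or.inr (Or.inr (Or.inr (Or.inr (Or.inl rfl))))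
    · exact Or.inr (Or.inr (Or.inr (Or.inr (Or.inr rfl))))
  | mul x y hx hy =>
    obtain ⟨lx, hlx, hpx⟩ := hx
    obtain ⟨ly, hly, hpy⟩ := hy
    refine ⟨lx ++ ly, ?_, by simp [hpx, hpy]⟩
    intro z hz
    rcases List.mem_append.mp hz with h | h
    · exact hlx z h
    · exact hly z h

lemma wordLen_exists (u : F3) :
    ∃ l : List F3, (∀ x ∈ l, x ∈ Xgen) ∧ l.prod = u ∧ l.length = wordLen Xgen u := by
  have hne : {n : ℕ | ∃ l : List F3, (∀ x ∈ l, x ∈ Xgen) ∧ l.prod = u ∧ l.length = n}.Nonempty := by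
    obtain ⟨l, hl, hp⟩ := exists_S_word u
    exact ⟨l.length, l, fun x hx => Or.inr (hl x hx), hp, rfl⟩
  exact Nat.sInf_mem hne

lemma wordLen_le (g : F3) (l : List F3) (hl : ∀ x ∈ l, x ∈ Xgen) (hp : l.prod = g) :
    wordLen Xgen g ≤ l.length :=
  Nat.sInf_le ⟨l, hl, hp, rfl⟩

/-- The key estimate in Lemma 4.1:
`|a^(5^(2j)) b^(5^(2j)) u a^(5^(2k)) b^(5^(2k))|_X ≤ 5^(2k-1) + |u|_X + 1`
whenever `j ≥ 1`, `k ≥ 2`, `k > j` and `5^k ≥ |u|`. -/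
theorem wordLen_conj_le (j : ℕ) (hj : 1 ≤ j) (u : F3) (k : ℕ) (hk2 : 2 ≤ k)
    (hjk : j < k) (hku : u.norm ≤ 5 ^ k) :
    wordLen Xgen
        (ga ^ (5 ^ (2 * j)) * gb ^ (5 ^ (2 * j)) * u * ga ^ (5 ^ (2 * k)) * gb ^ (5 ^ (2 * k)))
      ≤ 5 ^ (2 * k - 1) + wordLen Xgen u + 1 := by
  obtain ⟨lu, hlu, hpu, hlenu⟩ := wordLen_exists u
  have hle : (5:ℕ) ^ (2 * j) ≤ 5 ^ (2 * k - 1) :=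
    Nat.pow_le_pow_right (by norm_num) (by omega)
  set d : ℕ := 5 ^ (2 * k - 1) - 5 ^ (2 * j) with hd
  have hdsum : 5 ^ (2 * j) + d = 5 ^ (2 * k - 1) := by omega
  have hxmem : xgen u⁻¹ k ∈ Xgen := by
    left
    simp only [Xinf, Set.mem_iUnion, Set.mem_setOf_eq]
    exact ⟨k, hk2, u⁻¹, by rwa [FreeGroup.norm_inv_eq], rfl⟩
  set l : List F3 :=
    List.replicate (5 ^ (2 * j)) ga ++ List.replicate d gb⁻¹ ++ lu ++ [xgen u⁻¹ k] with hl
  have hmem : ∀ x ∈ l, x ∈ Xgen := by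
    intro x hx
    simp only [hl, List.mem_append, List.mem_replicate, List.mem_singleton] at hx
    rcases hx with ((⟨-, h⟩ | ⟨-, h⟩) | h) | h
    · exact h ▸ Or.inr (Or.inl rfl)
    · exact h ▸ Or.inr (Or.inr (Or.inr (Or.inr (Or.inr (Or.inl rfl)))))
    · exact hlu x h
    · exact h ▸ hxmem
  have hprod : l.prod =
      ga ^ (5 ^ (2 * j)) * gb ^ (5 ^ (2 * j)) * u * ga ^ (5 ^ (2 * k)) * gb ^ (5 ^ (2 * k)) := by
    have h1 : (gb⁻¹ : F3) ^ d * gb ^ (5 ^ (2 * k - 1)) = gb ^ (5 ^ (2 * j)) := by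
      have he : (5:ℕ) ^ (2 * k - 1) = d + 5 ^ (2 * j) := by omega
      rw [he, pow_add, inv_pow, inv_mul_cancel_left]
    simp only [hl, List.prod_append, List.prod_replicate, List.prod_singleton, xgen, hpu]
    calc ga ^ 5 ^ (2 * j) * gb⁻¹ ^ d * u *
          (u⁻¹ * gb ^ 5 ^ (2 * k - 1) * u⁻¹⁻¹ * ga ^ 5 ^ (2 * k) * gb ^ 5 ^ (2 * k))
        = ga ^ 5 ^ (2 * j) * (gb⁻¹ ^ d * gb ^ 5 ^ (2 * k - 1)) * u *
            ga ^ 5 ^ (2 * k) * gb ^ 5 ^ (2 * k) := by group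
      _ = _ := by rw [h1]
  have hlen : l.length = 5 ^ (2 * k - 1) + wordLen Xgen u + 1 := by
    simp only [hl, List.length_append, List.length_replicate, List.length_singleton, hlenu]
    omega
  calc wordLen Xgen _ ≤ l.length := wordLen_le _ l hmem hprod
    _ = _ := hlen
end
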